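/- arXiv:2105.04291 — 3 statements merged into one kernel-verified Lean document; each statement's English description precedes it below -/
import Mathlib

section
/- For all vectors A, B in the Euclidean space ℝ³ the inequality (1/4)(|A|² − 1)² − (1/4)(|B|² − 1)² + (1/4)(|A|² − |B|²)² + (1/2)(A·(A − B))² + (1/2)|A − B|² ≤ (A − B)·(|A|²A − B) holds. -/
open RealInnerProductSpace

/-- Convex-splitting inequality (Lemma 2.3): for all `A B : ℝ³`,
`(1/4)(|A|²−1)² − (1/4)(|B|²−1)² + (1/4)(|A|²−|B|²)² + (1/2)(A·(A−B))² + (1/2)|A−B|²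
  ≤ (A−B)·(|A|²A − B)`. -/
theorem convex_splitting_inequality (A B : EuclideanSpace ℝ (Fin 3)) :
    (1/4) * (‖A‖^2 - 1)^2 - (1/4) * (‖B‖^2 - 1)^2 + (1/4) * (‖A‖^2 - ‖B‖^2)^2
      + (1/2) * (⟪A, A - B⟫)^2 + (1/2) * ‖A - B‖^2
    ≤ ⟪A - B, ‖A‖^2 • A - B⟫ := by
  have hCS : ⟪A, B⟫ * ⟪A, B⟫ ≤ ‖A‖ ^ 2 * ‖B‖ ^ 2 := by
    have := abs_real_inner_le_norm A B
    nlinarith [abs_nonneg ⟪A, B⟫, sq_abs ⟪A, B⟫, norm_nonneg A, norm_nonneg B]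
  have hsub : ‖A - B‖ ^ 2 = ‖A‖ ^ 2 - 2 * ⟪A, B⟫ + ‖B‖ ^ 2 := by
    rw [@norm_sub_sq_real]
  simp only [inner_sub_left, inner_sub_right, inner_smul_right,
    real_inner_self_eq_norm_sq, real_inner_comm B A, hsub]
  nlinarith [hCS, real_inner_comm A B]
end

section
/- Let F : (−1,1) → ℝ be continuous and nondecreasing with F(s) → −∞ as s → −1⁺ and F(s) → +∞ as s → 1⁻, let ε ∈ (0,1) and let m ∈ [−1+ε, 1−ε]. Then there exist constants C₁ > 0 and C₂ ≥ 0 such that for all s ∈ (−1,1): F(s)·(s − m) ≥ C₁·|F(s)| − C₂. -/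
open Filter

/-- If `F : (−1,1) → ℝ` is continuous and nondecreasing with `F(s) → −∞` as `s → −1⁺`
and `F(s) → +∞` as `s → 1⁻`, `ε ∈ (0,1)` and `m ∈ [−1+ε, 1−ε]`, then there exist
`C₁ > 0` and `C₂ ≥ 0` such that `F(s)·(s − m) ≥ C₁·|F(s)| − C₂` for all `s ∈ (−1,1)`. -/
theorem singular_potential_pointwise_estimate (F : ℝ → ℝ)
    (hFc : ContinuousOn F (Set.Ioo (-1) 1))
    (hFm : MonotoneOn F (Set.Ioo (-1) 1))
    (hFbot : Tendsto F (nhdsWithin (-1) (Set.Ioo (-1) 1)) atBot)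
    (hFtop : Tendsto F (nhdsWithin 1 (Set.Ioo (-1) 1)) atTop)
    (ε : ℝ) (hε : ε ∈ Set.Ioo (0:ℝ) 1)
    (m : ℝ) (hm : m ∈ Set.Icc (-1 + ε) (1 - ε)) :
    ∃ C₁ > (0:ℝ), ∃ C₂ ≥ (0:ℝ), ∀ s ∈ Set.Ioo (-1:ℝ) 1,
      C₁ * |F s| - C₂ ≤ F s * (s - m) := by
  obtain ⟨hε0, hε1⟩ := hε
  obtain ⟨hm1, hm2⟩ := hm
  set a : ℝ := -1 + ε / 2 with ha_def
  set b : ℝ := 1 - ε / 2 with hb_def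
  have ha : a ∈ Set.Ioo (-1 : ℝ) 1 := ⟨by simp [ha_def]; linarith, by simp [ha_def]; linarith⟩
  have hb : b ∈ Set.Ioo (-1 : ℝ) 1 := ⟨by simp [hb_def]; linarith, by simp [hb_def]; linarith⟩
  set M : ℝ := max |F a| |F b| with hM_def
  have hMa : |F a| ≤ M := le_max_left _ _
  have hMb : |F b| ≤ M := le_max_right _ _
  have hM0 : 0 ≤ M := le_trans (abs_nonneg _) hMa
  refine ⟨ε / 2, by linarith, 2 * M + (ε / 2) * M, by nlinarith, ?_⟩
  rintro s ⟨hs1, hs2⟩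
  have hsmem : s ∈ Set.Ioo (-1 : ℝ) 1 := ⟨hs1, hs2⟩
  rcases le_or_gt s a with hcase | hcase
  · -- s ≤ a : left tail
    have hFle : F s ≤ F a := hFm hsmem ha hcase
    have hsm : s - m ≤ -(ε / 2) := by
      have : m ≥ -1 + ε := hm1
      simp only [ha_def] at hcase; linarith
    rcases le_or_gt (F s) 0 with hFs | hFs
    · rw [abs_of_nonpos hFs]
      nlinarith [mul_nonneg (neg_nonneg.mpr hFs) (by linarith : (0:ℝ) ≤ -(s - m) - ε / 2)]
    · have habs : |F s| ≤ M := by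
        rw [abs_of_pos hFs]
        calc F s ≤ F a := hFle
        _ ≤ |F a| := le_abs_self _
        _ ≤ M := hMa
      have habs' : F s ≤ M := (le_abs_self _).trans habs
      rw [abs_of_pos hFs]
      nlinarith [mul_nonneg hFs.le (by linarith : (0:ℝ) ≤ s - m + 2),
        mul_nonneg hε0.le (sub_nonneg.mpr habs')]
  · rcases le_or_gt b s with hcase2 | hcase2
    · -- b ≤ s : right tail
      have hFge : F b ≤ F s := hFm hb hsmem hcase2
      have hsm : ε / 2 ≤ s - m := by
        simp only [hb_def] at hcase2; linarith
      rcases le_or_gt 0 (F s) with hFs | hFs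
      · rw [abs_of_nonneg hFs]
        nlinarith [mul_nonneg hFs (by linarith : (0:ℝ) ≤ s - m - ε / 2)]
      · have habs : -F s ≤ M := by
          have : -F s ≤ -F b := by linarith
          calc -F s ≤ -F b := this
          _ ≤ |F b| := neg_le_abs _
          _ ≤ M := hMb
        rw [abs_of_neg hFs]
        nlinarith [mul_nonneg (neg_nonneg.mpr hFs.le) (by linarith : (0:ℝ) ≤ 2 - (s - m)),
          mul_nonneg hε0.le (by linarith : (0:ℝ) ≤ M + F s)]
    · -- middle: a < s < b
      have hF1 : F a ≤ F s := hFm ha hsmem hcase.le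
      have hF2 : F s ≤ F b := hFm hsmem hb hcase2.le
      have habs : |F s| ≤ M := by
        rw [abs_le]
        constructor
        · calc -M ≤ -|F a| := by linarith
          _ ≤ F a := neg_abs_le _
          _ ≤ F s := hF1
        · calc F s ≤ F b := hF2
          _ ≤ |F b| := le_abs_self _
          _ ≤ M := hMb
      have h1 : -(|F s| * |s - m|) ≤ F s * (s - m) := by
        rw [← abs_mul]; exact neg_abs_le _
      have h2 : |s - m| ≤ 2 := by
        rw [abs_le]; constructor <;> linarith
      nlinarith [abs_nonneg (F s), abs_nonneg (s - m),
        mul_nonneg (sub_nonneg.mpr habs) (abs_nonneg (s - m)),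
        mul_nonneg (abs_nonneg (F s)) (sub_nonneg.mpr h2)]
end

section
/- Let (Q, μ) be a finite measure space and F : (−1,1) → ℝ a nondecreasing function with F(s) → +∞ as s → 1⁻ and F(s) → −∞ as s → −1⁺. Let φ_N : Q → ℝ (N ∈ ℕ) and φ : Q → ℝ be measurable functions such that |φ_N(x)| < 1 for μ-almost every x and every N, φ_N → φ μ-almost everywhere as N → ∞, and there exists a constant c with ∫_Q |F(φ_N(x))| dμ(x) ≤ c for all N. Then μ({x ∈ Q : |φ(x)| = 1}) = 0. -/
open Filter MeasureTheory Set Topology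
open scoped ENNReal

/-!
Fix `n`. Since `|F| → ∞` at both endpoints of `(-1, 1)`, there is an open `W ⊆ (-1, 1)`,
a relative neighbourhood of `1` and of `-1`, on which `n ≤ |F|`. Wherever `|φ| = 1`, the values
`φ_N x` eventually lie in `W`, so Chebyshev's inequality on the measurable sets `{φ_N ∈ W}`
gives `n * μ {|φ| = 1} ≤ c` for every `n`. Working with an open `W` rather than with
`{n ≤ |F ∘ φ_N|}` matters: `F` need not be measurable.
-/

theorem ENNReal.eq_zero_of_forall_natCast_mul_le {a b : ℝ≥0∞} (hb : b ≠ ∞)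
    (h : ∀ n : ℕ, (n : ℝ≥0∞) * a ≤ b) : a = 0 := by
  by_contra ha
  have hlim : Tendsto (fun n : ℕ => (n : ℝ≥0∞) * a) atTop (𝓝 (∞ * a)) :=
    ENNReal.Tendsto.mul_const ENNReal.tendsto_nat_nhds_top (Or.inl ENNReal.top_ne_zero)
  rw [ENNReal.top_mul ha] at hlim
  exact hb (top_le_iff.1 (le_of_tendsto' hlim h))

theorem exists_isOpen_mem_nhdsWithin_forall_le {X β : Type*} [TopologicalSpace X] [Preorder β]
    {s : Set X} (hs : IsOpen s) {a : X} {g : X → β} (hg : Tendsto g (𝓝[s] a) atTop) (M : β) :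
    ∃ W, IsOpen W ∧ W ∈ 𝓝[s] a ∧ ∀ y ∈ W, M ≤ g y := by
  obtain ⟨u, hu, hau, hus⟩ := mem_nhdsWithin.1 (hg.eventually_ge_atTop M)
  exact ⟨s ∩ u, hs.inter hu, inter_mem_nhdsWithin s (hu.mem_nhds hau),
    fun y hy => hus ⟨hy.2, hy.1⟩⟩

section Chebyshev

variable {α : Type*} [MeasurableSpace α] {μ : Measure α}

theorem mul_measure_le_lintegral_of_forall_mem_le {C : Set α} (hC : MeasurableSet C)
    {f : α → ℝ≥0∞} {M : ℝ≥0∞} (hf : ∀ x ∈ C, M ≤ f x) : M * μ C ≤ ∫⁻ x, f x ∂μ :=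
  calc M * μ C = ∫⁻ _ in C, M ∂μ := (setLIntegral_const C M).symm
    _ ≤ ∫⁻ x in C, f x ∂μ := setLIntegral_mono' hC hf
    _ ≤ ∫⁻ x, f x ∂μ := setLIntegral_le_lintegral C f

theorem mul_measure_le_of_ae_eventually_mem {S : Set α} {C : ℕ → Set α} {M b : ℝ≥0∞}
    (hS : ∀ᵐ x ∂μ, x ∈ S → ∀ᶠ N in atTop, x ∈ C N) (hC : ∀ N, M * μ (C N) ≤ b) :
    M * μ S ≤ b := by
  have hSC : S ≤ᵐ[μ] (liminf C atTop : Set α) := by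
    filter_upwards [hS] with x hx hxS
    exact mem_liminf_iff_eventually_mem.2 (hx hxS)
  have hmono : Monotone fun k => ⋂ N ≥ k, C N :=
    fun _ _ hkl => biInter_mono (fun _ hN => le_trans hkl hN) fun _ _ => le_rfl
  calc M * μ S ≤ M * μ (liminf C atTop) := mul_le_mul_right (measure_mono_ae hSC) M
    _ = ⨆ k, M * μ (⋂ N ≥ k, C N) := by
      simp only [liminf_eq_iSup_iInf_of_nat, iSup_eq_iUnion, iInf_eq_iInter]
      rw [hmono.measure_iUnion, ENNReal.mul_iSup]
    _ ≤ b := iSup_le fun k =>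
      (mul_le_mul_right (measure_mono (biInter_subset_of_mem le_rfl)) M).trans (hC k)

end Chebyshev

theorem limit_order_parameter_strictly_less_one_general
    {Q : Type*} [MeasurableSpace Q] (μ : Measure Q)
    (F : ℝ → ℝ)
    (hFtop : Tendsto F (nhdsWithin 1 (Set.Ioo (-1) 1)) atTop)
    (hFbot : Tendsto F (nhdsWithin (-1) (Set.Ioo (-1) 1)) atBot)
    (φN : ℕ → Q → ℝ) (φ : Q → ℝ)
    (hφNmeas : ∀ N, Measurable (φN N))
    (hφNlt : ∀ N, ∀ᵐ x ∂μ, |φN N x| < 1)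
    (hconv : ∀ᵐ x ∂μ, Tendsto (fun N => φN N x) atTop (nhds (φ x)))
    (c : ℝ)
    (hbound : ∀ N, ∫⁻ x, ENNReal.ofReal |F (φN N x)| ∂μ ≤ ENNReal.ofReal c) :
    μ {x | |φ x| = 1} = 0 := by
  refine ENNReal.eq_zero_of_forall_natCast_mul_le (ENNReal.ofReal_ne_top (r := c)) fun n => ?_
  obtain ⟨Wpos, hWpos, hWpos1, hFWpos⟩ := exists_isOpen_mem_nhdsWithin_forall_le isOpen_Ioo
    (tendsto_abs_atTop_atTop.comp hFtop) (n : ℝ)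
  obtain ⟨Wneg, hWneg, hWneg1, hFWneg⟩ := exists_isOpen_mem_nhdsWithin_forall_le isOpen_Ioo
    (tendsto_abs_atBot_atTop.comp hFbot) (n : ℝ)
  refine mul_measure_le_of_ae_eventually_mem (C := fun N => φN N ⁻¹' (Wpos ∪ Wneg)) ?_ fun N => ?_
  · filter_upwards [ae_all_iff.2 hφNlt, hconv] with x hlt hx hx1
    have hxI : Tendsto (φN · x) atTop (𝓝[Ioo (-1) 1] (φ x)) :=
      tendsto_nhdsWithin_iff.2 ⟨hx, .of_forall fun N => abs_lt.1 (hlt N)⟩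
    rcases (abs_eq zero_le_one).1 hx1 with hφx | hφx <;> rw [hφx] at hxI
    exacts [(hxI.eventually_mem hWpos1).mono fun _ => Or.inl,
      (hxI.eventually_mem hWneg1).mono fun _ => Or.inr]
  · refine (mul_measure_le_lintegral_of_forall_mem_le
      (hφNmeas N (hWpos.union hWneg).measurableSet) fun x hx => ?_).trans (hbound N)
    rw [← ENNReal.ofReal_natCast]
    exact ENNReal.ofReal_le_ofReal (hx.elim (hFWpos _) (hFWneg _))

/-- If `F : (−1,1) → ℝ` is nondecreasing and blows up at `±1`, `φ_N → φ` a.e. with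
`|φ_N| < 1` a.e., and `∫ |F(φ_N)| dμ ≤ c` uniformly in `N`, then the set where
`|φ| = 1` has measure zero. -/
theorem limit_order_parameter_strictly_less_one
    {Q : Type*} [MeasurableSpace Q] (μ : Measure Q) [IsFiniteMeasure μ]
    (F : ℝ → ℝ) (hFm : MonotoneOn F (Set.Ioo (-1) 1))
    (hFtop : Tendsto F (nhdsWithin 1 (Set.Ioo (-1) 1)) atTop)
    (hFbot : Tendsto F (nhdsWithin (-1) (Set.Ioo (-1) 1)) atBot)
    (φN : ℕ → Q → ℝ) (φ : Q → ℝ)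
    (hφNmeas : ∀ N, Measurable (φN N)) (hφmeas : Measurable φ)
    (hφNlt : ∀ N, ∀ᵐ x ∂μ, |φN N x| < 1)
    (hconv : ∀ᵐ x ∂μ, Tendsto (fun N => φN N x) atTop (nhds (φ x)))
    (c : ℝ)
    (hbound : ∀ N, ∫⁻ x, ENNReal.ofReal |F (φN N x)| ∂μ ≤ ENNReal.ofReal c) :
    μ {x | |φ x| = 1} = 0 :=
  limit_order_parameter_strictly_less_one_general μ F hFtop hFbot φN φ hφNmeas hφNlt hconv c hbound
end
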